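/- Let ρ₁, ρ₂, τ₁, τ₂ be 2×2 density matrices. The condition that for all real t the matrix τ₁ − t τ₂ is majorized by ρ₁ − t ρ₂ (both being Hermitian of equal trace 1−t) is equivalent to: det(τ₁) ≥ det(ρ₁), det(τ₂) ≥ det(ρ₂), and (tr(ρ₁^# ρ₂) − tr(τ₁^# τ₂))² ≤ 4(det(τ₁) − det(ρ₁))(det(τ₂) − det(ρ₂)). -/

import Mathlib

open Matrix ComplexOrder


lemma herm_trace_eq (A : Matrix (Fin 2) (Fin 2) ℂ) (hA : A.IsHermitian) :
    A.trace = ∑ i, (hA.eigenvalues i : ℂ) := by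
  conv_lhs => rw [hA.spectral_theorem, Unitary.conjStarAlgAut_apply]
  rw [Matrix.trace_mul_cycle]
  rw [(Matrix.mem_unitaryGroup_iff').mp (hA.eigenvectorUnitary).2]
  simp [Matrix.trace_diagonal]

lemma det_sub_smul (A B : Matrix (Fin 2) (Fin 2) ℂ) (t : ℂ) :
    (A - t • B).det = A.det + t^2 * B.det - t * (A.adjugate * B).trace := by
  simp [Matrix.det_fin_two, Matrix.adjugate_fin_two, Matrix.trace_fin_two, Matrix.mul_apply,
    Fin.sum_univ_two, Matrix.sub_apply, Matrix.smul_apply, smul_eq_mul, Matrix.vecMul, dotProduct, Fin.sum_univ_two, Matrix.vecHead, Matrix.vecTail]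
  ring

lemma max_prod_iff (a0 a1 b0 b1 : ℝ) (h : a0 + a1 = b0 + b1) :
    (max b0 b1 ≤ max a0 a1 ↔ a0 * a1 ≤ b0 * b1) := by
  have ea : max a0 a1 = (a0 + a1 + |a0 - a1|) / 2 := by
    rcases le_total a0 a1 with h' | h' <;>
      [rw [max_eq_right h', abs_of_nonpos (by linarith)];
       rw [max_eq_left h', abs_of_nonneg (by linarith)]] <;> ring
  have eb : max b0 b1 = (b0 + b1 + |b0 - b1|) / 2 := by
    rcases le_total b0 b1 with h' | h' <;>
      [rw [max_eq_right h', abs_of_nonpos (by linarith)];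
       rw [max_eq_left h', abs_of_nonneg (by linarith)]] <;> ring
  rw [ea, eb]
  constructor
  · intro hh
    have h2 : |b0 - b1| ≤ |a0 - a1| := by linarith
    have hsq := sq_le_sq.mpr h2
    have hq : (a0 + a1) ^ 2 = (b0 + b1) ^ 2 := by rw [h]
    nlinarith [hsq, hq]
  · intro hh
    have hq : (a0 + a1) ^ 2 = (b0 + b1) ^ 2 := by rw [h]
    have hsq : (b0 - b1) ^ 2 ≤ (a0 - a1) ^ 2 := by nlinarith [hh, hq]
    have h2 := sq_le_sq.mp hsq
    linarith

lemma quad_nonneg_iff (a b c : ℝ) :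
    (∀ t : ℝ, 0 ≤ a * t ^ 2 + b * t + c) ↔ (0 ≤ c ∧ 0 ≤ a ∧ b ^ 2 ≤ 4 * a * c) := by
  constructor
  · intro h
    have hc : 0 ≤ c := by have := h 0; linarith
    have ha : 0 ≤ a := by
      by_contra ha
      push_neg at ha
      set t : ℝ := max 1 ((|b| + |c| + 1) / (-a)) with ht
      have ht1 : (1:ℝ) ≤ t := le_max_left _ _
      have ht0 : (0:ℝ) ≤ t := by linarith
      have ht2 : (|b| + |c| + 1) / (-a) ≤ t := le_max_right _ _
      have ht3 : |b| + |c| + 1 ≤ t * (-a) := (div_le_iff₀ (by linarith)).mp ht2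
      have key : t * (|b| + |c| + 1) ≤ -(a * t ^ 2) := by
        have := mul_le_mul_of_nonneg_left ht3 ht0
        nlinarith
      have h1 : b * t ≤ |b| * t := mul_le_mul_of_nonneg_right (le_abs_self b) ht0
      have h2 : |c| ≤ t * |c| := by nlinarith [abs_nonneg c]
      have := h t
      linarith [le_abs_self c]
    refine ⟨hc, ha, ?_⟩
    have hd := discrim_le_zero (a := a) (b := b) (c := c) (fun x => by
      have := h x; nlinarith)
    rw [discrim] at hd; linarith
  · rintro ⟨hc, ha, hd⟩ t
    rcases eq_or_lt_of_le ha with he | he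
    · have hb : b = 0 := by nlinarith [sq_nonneg b]
      rw [← he, hb]; ring_nf; linarith
    · nlinarith [sq_nonneg (2 * a * t + b)]

lemma herm_sum_re (M : Matrix (Fin 2) (Fin 2) ℂ) (hM : M.IsHermitian) :
    hM.eigenvalues 0 + hM.eigenvalues 1 = M.trace.re := by
  rw [herm_trace_eq M hM, Fin.sum_univ_two, ← Complex.ofReal_add, Complex.ofReal_re]

lemma herm_det_re (M : Matrix (Fin 2) (Fin 2) ℂ) (hM : M.IsHermitian) :
    hM.eigenvalues 0 * hM.eigenvalues 1 = M.det.re := by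
  rw [hM.det_eq_prod_eigenvalues, Fin.prod_univ_two]
  simp [Complex.mul_re]

lemma re_det_sub (A B : Matrix (Fin 2) (Fin 2) ℂ) (t : ℝ) :
    ((A - (t:ℂ) • B).det).re
      = A.det.re + t ^ 2 * B.det.re - t * ((A.adjugate * B).trace).re := by
  rw [det_sub_smul]
  simp [Complex.add_re, Complex.sub_re, Complex.re_ofReal_mul, ← Complex.ofReal_pow]

lemma herm_sub_smul {M N : Matrix (Fin 2) (Fin 2) ℂ} (hM : M.IsHermitian)
    (hN : N.IsHermitian) (t : ℝ) : (M - (t:ℂ) • N).IsHermitian := by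
  simp [Matrix.IsHermitian, Matrix.conjTranspose_sub, Matrix.conjTranspose_smul,
    hM.eq, hN.eq, Complex.star_def, Complex.conj_ofReal]

/-- `B ≺ A` for Hermitian 2×2 matrices: the largest eigenvalue of `B` is at most that of `A`
and the eigenvalue sums agree. -/
noncomputable def Maj2 {A B : Matrix (Fin 2) (Fin 2) ℂ}
    (hA : A.IsHermitian) (hB : B.IsHermitian) : Prop :=
  max (hB.eigenvalues 0) (hB.eigenvalues 1) ≤ max (hA.eigenvalues 0) (hA.eigenvalues 1) ∧
    hB.eigenvalues 0 + hB.eigenvalues 1 = hA.eigenvalues 0 + hA.eigenvalues 1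

theorem majorization_family_iff_det_conditions
    (ρ₁ ρ₂ τ₁ τ₂ : Matrix (Fin 2) (Fin 2) ℂ)
    (hρ₁ : ρ₁.PosSemidef) (hρ₂ : ρ₂.PosSemidef) (hτ₁ : τ₁.PosSemidef) (hτ₂ : τ₂.PosSemidef)
    (htρ₁ : ρ₁.trace = 1) (htρ₂ : ρ₂.trace = 1) (htτ₁ : τ₁.trace = 1) (htτ₂ : τ₂.trace = 1) :
    (∀ (t : ℝ) (hρ : (ρ₁ - (t : ℂ) • ρ₂).IsHermitian) (hτ : (τ₁ - (t : ℂ) • τ₂).IsHermitian),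
        Maj2 hρ hτ) ↔
      (ρ₁.det.re ≤ τ₁.det.re ∧ ρ₂.det.re ≤ τ₂.det.re ∧
        ((ρ₁.adjugate * ρ₂).trace.re - (τ₁.adjugate * τ₂).trace.re) ^ 2 ≤
          4 * (τ₁.det.re - ρ₁.det.re) * (τ₂.det.re - ρ₂.det.re)) := by
  set a : ℝ := τ₂.det.re - ρ₂.det.re with ha
  set b : ℝ := (ρ₁.adjugate * ρ₂).trace.re - (τ₁.adjugate * τ₂).trace.re with hb
  set c : ℝ := τ₁.det.re - ρ₁.det.re with hc
  -- traces of pencils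
  have trρ : ∀ t : ℝ, (ρ₁ - (t:ℂ) • ρ₂).trace.re = 1 - t := by
    intro t
    rw [Matrix.trace_sub, Matrix.trace_smul, htρ₁, htρ₂]
    simp
  have trτ : ∀ t : ℝ, (τ₁ - (t:ℂ) • τ₂).trace.re = 1 - t := by
    intro t
    rw [Matrix.trace_sub, Matrix.trace_smul, htτ₁, htτ₂]
    simp
  have key : ∀ (t : ℝ) (hρ : (ρ₁ - (t:ℂ) • ρ₂).IsHermitian)
      (hτ : (τ₁ - (t:ℂ) • τ₂).IsHermitian),
      Maj2 hρ hτ ↔ 0 ≤ a * t ^ 2 + b * t + c := by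
    intro t hρ hτ
    have hsum : hρ.eigenvalues 0 + hρ.eigenvalues 1 = hτ.eigenvalues 0 + hτ.eigenvalues 1 := by
      rw [herm_sum_re _ hρ, herm_sum_re _ hτ, trρ t, trτ t]
    have hdet : (Maj2 hρ hτ ↔ ((ρ₁ - (t:ℂ) • ρ₂).det).re ≤ ((τ₁ - (t:ℂ) • τ₂).det).re) := by
      unfold Maj2
      rw [← herm_det_re _ hρ, ← herm_det_re _ hτ]
      rw [max_prod_iff _ _ _ _ hsum]
      exact and_iff_left hsum.symm
    rw [hdet, re_det_sub, re_det_sub, ha, hb, hc]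
    constructor <;> intro h <;> nlinarith [h]
  constructor
  · intro H
    have hq := (quad_nonneg_iff a b c).mp (fun t =>
      (key t (herm_sub_smul hρ₁.1 hρ₂.1 t) (herm_sub_smul hτ₁.1 hτ₂.1 t)).mp
        (H t _ _))
    refine ⟨by linarith [hq.1], by linarith [hq.2.1], ?_⟩
    have := hq.2.2
    nlinarith [this]
  · rintro ⟨h1, h2, h3⟩ t hρ hτ
    refine (key t hρ hτ).mpr ((quad_nonneg_iff a b c).mpr ⟨by linarith, by linarith, ?_⟩ t)
    nlinarith [h3]
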